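/- arXiv:2509.14244 — 3 statements merged into one kernel-verified Lean document; each statement's English description precedes it below -/
import Mathlib

section
/- Let G : ℝ → ℝ be the sectorial Green function of D³+1. Then for every real x ≠ 0, G is three times differentiable at x and satisfies the homogeneous equation G'''(x) + G(x) = 0. -/
open Real

/-- The sectorial Green function of the cubic operator `D³ + 1`. -/
noncomputable def greenC3 (x : ℝ) : ℝ :=
  if 0 ≤ x then (1/3) * Real.exp (-x)
  else (1/3) * Real.exp (x/2) *
    (Real.cos (Real.sqrt 3 * x / 2) - Real.sqrt 3 * Real.sin (Real.sqrt 3 * x / 2))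

/-! On each side of the origin `G` agrees with `t ↦ Re (c · exp (ω t))` for a cube root `ω`
of `-1`: `ω = -1` on `(0, ∞)` and `ω = exp (iπ/3)` on `(-∞, 0)`. Each derivative multiplies
such a function's `c` by `ω`, so its third derivative is its negative; differentiability and
derivatives at `x ≠ 0` only depend on `G` near `x`. -/

open Filter Topology

theorem hasDerivAt_re_const_mul_cexp (c ω : ℂ) (x : ℝ) :
    HasDerivAt (fun t : ℝ => (c * Complex.exp (ω * t)).re)
      (c * ω * Complex.exp (ω * x)).re x := by
  have h : HasDerivAt (fun z : ℂ => c * Complex.exp (ω * z)) (c * ω * Complex.exp (ω * x)) x := by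
    simpa [mul_comm, mul_left_comm, mul_assoc] using
      (((hasDerivAt_id (x : ℂ)).const_mul ω).cexp).const_mul c
  exact h.real_of_complex

theorem thirdDeriv_add_self_eq_zero_of_eventuallyEq {G f f' f'' : ℝ → ℝ} {x : ℝ}
    (hf : ∀ y, HasDerivAt f (f' y) y) (hf' : ∀ y, HasDerivAt f' (f'' y) y)
    (hf'' : ∀ y, HasDerivAt f'' (-f y) y) (hG : G =ᶠ[𝓝 x] f) :
    DifferentiableAt ℝ G x ∧ DifferentiableAt ℝ (deriv G) x ∧
      DifferentiableAt ℝ (deriv (deriv G)) x ∧ deriv (deriv (deriv G)) x + G x = 0 := by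
  have hG' : deriv G =ᶠ[𝓝 x] f' := by
    simpa only [funext fun y => (hf y).deriv] using hG.deriv
  have hG'' : deriv (deriv G) =ᶠ[𝓝 x] f'' := by
    simpa only [funext fun y => (hf' y).deriv] using hG'.deriv
  refine ⟨hG.differentiableAt_iff.mpr (hf x).differentiableAt,
    hG'.differentiableAt_iff.mpr (hf' x).differentiableAt,
    hG''.differentiableAt_iff.mpr (hf'' x).differentiableAt, ?_⟩
  rw [hG''.deriv_eq, (hf'' x).deriv, hG.eq_of_nhds, neg_add_cancel]

theorem thirdDeriv_add_self_eq_zero_of_eventuallyEq_re_cexp {G : ℝ → ℝ} {x : ℝ} {c ω : ℂ}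
    (hω : ω ^ 3 = -1) (hG : G =ᶠ[𝓝 x] fun t => (c * Complex.exp (ω * t)).re) :
    DifferentiableAt ℝ G x ∧ DifferentiableAt ℝ (deriv G) x ∧
      DifferentiableAt ℝ (deriv (deriv G)) x ∧ deriv (deriv (deriv G)) x + G x = 0 := by
  refine thirdDeriv_add_self_eq_zero_of_eventuallyEq (hasDerivAt_re_const_mul_cexp c ω)
    (hasDerivAt_re_const_mul_cexp (c * ω) ω) (fun y => ?_) hG
  convert hasDerivAt_re_const_mul_cexp (c * ω * ω) ω y using 1
  rw [← Complex.neg_re]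
  congr 1
  linear_combination (-(c * Complex.exp (ω * y))) * hω

theorem mk_half_sqrt_three_half_pow_three : (⟨1 / 2, √3 / 2⟩ : ℂ) ^ 3 = -1 := by
  have h : √3 ^ 2 = 3 := Real.sq_sqrt (by norm_num)
  apply Complex.ext <;> simp only [pow_succ, pow_zero, one_mul, Complex.mul_re, Complex.mul_im,
    Complex.neg_re, Complex.neg_im, Complex.one_re, Complex.one_im]
  · linear_combination (-3 / 8 : ℝ) * h
  · linear_combination (-√3 / 8) * h

theorem greenC3_eq_re_of_nonneg {t : ℝ} (ht : 0 ≤ t) :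
    greenC3 t = ((1 / 3 : ℂ) * Complex.exp (-1 * t)).re := by
  rw [greenC3, if_pos ht]
  simp [Complex.mul_re, Complex.exp_re]

theorem greenC3_eq_re_of_neg {t : ℝ} (ht : t < 0) :
    greenC3 t = (⟨1 / 3, √3 / 3⟩ * Complex.exp (⟨1 / 2, √3 / 2⟩ * t)).re := by
  rw [greenC3, if_neg ht.not_ge]
  simp only [Complex.mul_re, Complex.mul_im, Complex.exp_re, Complex.exp_im, Complex.ofReal_re,
    Complex.ofReal_im, mul_zero, sub_zero, zero_add]
  ring_nf

/-- For every `x ≠ 0`, the sectorial Green function is three times differentiable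
at `x` and satisfies the homogeneous equation `G'''(x) + G(x) = 0`. -/
theorem greenC3_homogeneous_off_origin :
    ∀ x : ℝ, x ≠ 0 →
      DifferentiableAt ℝ greenC3 x ∧
      DifferentiableAt ℝ (deriv greenC3) x ∧
      DifferentiableAt ℝ (deriv (deriv greenC3)) x ∧
      deriv (deriv (deriv greenC3)) x + greenC3 x = 0 := by
  intro x hx
  rcases hx.lt_or_gt with hneg | hpos
  · exact thirdDeriv_add_self_eq_zero_of_eventuallyEq_re_cexp mk_half_sqrt_three_half_pow_three
      ((eventually_lt_nhds hneg).mono fun t ht => greenC3_eq_re_of_neg ht)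
  · exact thirdDeriv_add_self_eq_zero_of_eventuallyEq_re_cexp (by norm_num)
      ((eventually_gt_nhds hpos).mono fun t ht => greenC3_eq_re_of_nonneg ht.le)
end

section
/- The zero set of the sectorial Green function G of D³+1 on the negative half-line is exactly {x < 0 : G(x) = 0} = { (2/√3)·(π/6 − n·π) : n a positive natural number }. -/
open Real

/-- The zero set of the sectorial Green function on the negative half-line:
`{x < 0 : G(x) = 0} = {(2/√3)·(π/6 − n·π) : n ∈ ℕ, n > 0}`. -/
theorem greenC3_negative_zero_set :
    {x : ℝ | x < 0 ∧ greenC3 x = 0} =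
      {x : ℝ | ∃ n : ℕ, 0 < n ∧ x = (2 / Real.sqrt 3) * (π / 6 - n * π)} := by
  have h3 : (0:ℝ) < Real.sqrt 3 := Real.sqrt_pos.mpr (by norm_num)
  have hsq : Real.sqrt 3 * Real.sqrt 3 = 3 := Real.mul_self_sqrt (by norm_num)
  ext x
  simp only [Set.mem_setOf_eq]
  constructor
  · rintro ⟨hx, hG⟩
    rw [greenC3, if_neg (not_le.mpr hx)] at hG
    have hexp : (1/3 : ℝ) * Real.exp (x/2) ≠ 0 := by positivity
    have h0 : Real.cos (Real.sqrt 3 * x / 2) - Real.sqrt 3 * Real.sin (Real.sqrt 3 * x / 2) = 0 :=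
      by rcases mul_eq_zero.mp hG with h | h
         · exact absurd h hexp
         · exact h
    have hcos : Real.cos (Real.sqrt 3 * x / 2 + π/3) = 0 := by
      rw [Real.cos_add, Real.cos_pi_div_three, Real.sin_pi_div_three]
      nlinarith [h0]
    rw [Real.cos_eq_zero_iff] at hcos
    obtain ⟨k, hk⟩ := hcos
    have hxval : x = (2 / Real.sqrt 3) * (π / 6 + k * π) := by
      field_simp
      ring
      nlinarith [hk, Real.pi_pos]
    have hkneg : k < 0 := by
      by_contra h
      push_neg at h
      have : (0:ℝ) ≤ (k:ℝ) := by exact_mod_cast h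
      have : 0 < (2 / Real.sqrt 3) * (π / 6 + k * π) := by
        have := Real.pi_pos
        positivity
      linarith [hxval ▸ this]
    refine ⟨(-k).toNat, by omega, ?_⟩
    have : ((-k).toNat : ℝ) = -(k : ℝ) := by
      have : ((-k).toNat : ℤ) = -k := Int.toNat_of_nonneg (by omega)
      exact_mod_cast this
    rw [hxval, this]
    ring
  · rintro ⟨n, hn, rfl⟩
    have hpi := Real.pi_gt_three
    have hn1 : (1:ℝ) ≤ (n:ℝ) := by exact_mod_cast hn
    have hneg : (2 / Real.sqrt 3) * (π / 6 - n * π) < 0 := by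
      apply mul_neg_of_pos_of_neg
      · positivity
      · nlinarith
    refine ⟨hneg, ?_⟩
    rw [greenC3, if_neg (not_le.mpr hneg)]
    have harg : Real.sqrt 3 * ((2 / Real.sqrt 3) * (π / 6 - n * π)) / 2 = π / 6 - n * π := by
      field_simp
    rw [harg]
    have hcos : Real.cos (π / 6 - n * π + π/3) = 0 := by
      have : π / 6 - n * π + π/3 = π/2 - n * π := by ring
      rw [this, Real.cos_sub, Real.cos_pi_div_two, Real.sin_pi_div_two]
      have : Real.sin ((n:ℝ) * π) = 0 := Real.sin_nat_mul_pi n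
      rw [this]; ring
    rw [Real.cos_add, Real.cos_pi_div_three, Real.sin_pi_div_three] at hcos
    have : Real.cos (π / 6 - n * π) - Real.sqrt 3 * Real.sin (π / 6 - n * π) = 0 := by
      nlinarith [hcos]
    rw [this, mul_zero]
end

section
/- Convolution with the sectorial Green function solves the source problem: if F : ℝ → ℝ is continuous with compact support and φ(x) = ∫_ℝ G(x − ξ)·F(ξ) dξ, then φ is three times differentiable on ℝ and satisfies φ'''(x) + φ(x) = F(x) for every real x. -/
/-! On `[0, ∞)` the Green function is `Re ((1/3) e^{-t})` and on `(-∞, 0)` it is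
`Re ((2ω/3) e^{ωt})` with `ω = e^{iπ/3}`. Both exponents are cube roots of `-1`, so both
branches solve `y''' + y = 0`; at `0` they agree to first order and their second derivatives
jump by `1`. Writing `R`, `L` for the two branches and differentiating
`φ x = ∫_{ξ ≤ x} R (x - ξ) F ξ + ∫_{ξ > x} L (x - ξ) F ξ` under the integral sign, the `k`-th
derivative picks up the boundary term `(R - L)⁽ᵏ⁾(0) F x`, which is `0, 0, F x` for
`k = 0, 1, 2`; hence `φ''' = F - φ`. -/

open Real MeasureTheory

open Set Filter Topology

noncomputable def kernelConv (k F : ℝ → ℝ) (x : ℝ) : ℝ := ∫ ξ, k (x - ξ) * F ξ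

noncomputable def piecewiseKernel (R L : ℝ → ℝ) (t : ℝ) : ℝ := if 0 ≤ t then R t else L t

theorem hasDerivAt_intervalIntegral_of_continuous_uncurry {E : Type*} [NormedAddCommGroup E]
    [NormedSpace ℝ E] [CompleteSpace E] {k : ℝ → ℝ → E} (hk : Continuous (Function.uncurry k))
    (x₀ : ℝ) :
    HasDerivAt (fun x => ∫ ξ in x₀..x, k x ξ) (k x₀ x₀) x₀ := by
  rw [hasDerivAt_iff_isLittleO, Asymptotics.isLittleO_iff]
  intro ε hε
  obtain ⟨δ, hδ, hk_near⟩ := Metric.continuousAt_iff.mp (hk.continuousAt (x := (x₀, x₀))) ε hε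
  filter_upwards [Metric.ball_mem_nhds x₀ hδ] with x hx
  have hint : IntervalIntegrable (k x) volume x₀ x :=
    (hk.comp (Continuous.prodMk_right x)).intervalIntegrable x₀ x
  have hclose : ∀ ξ ∈ uIoc x₀ x, ‖k x ξ - k x₀ x₀‖ ≤ ε := fun ξ hξ => by
    have hξ : dist ξ x₀ ≤ dist x x₀ := abs_sub_left_of_mem_uIcc (uIoc_subset_uIcc hξ)
    rw [← dist_eq_norm]
    refine (hk_near (x := (x, ξ)) ?_).le
    simpa [Prod.dist_eq] using ⟨hx, hξ.trans_lt hx⟩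
  calc ‖(∫ ξ in x₀..x, k x ξ) - (∫ ξ in x₀..x₀, k x₀ ξ) - (x - x₀) • k x₀ x₀‖
      = ‖∫ ξ in x₀..x, (k x ξ - k x₀ x₀)‖ := by
        rw [intervalIntegral.integral_sub hint intervalIntegrable_const,
          intervalIntegral.integral_const, intervalIntegral.integral_same, sub_zero]
    _ ≤ ε * |x - x₀| := intervalIntegral.norm_integral_le_of_norm_le_const hclose
    _ = ε * ‖x - x₀‖ := by rw [Real.norm_eq_abs]

section
variable {F g : ℝ → ℝ}

theorem integrable_comp_sub_mul (hF : Continuous F) (hFc : HasCompactSupport F)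
    (hg : Continuous g) (x : ℝ) : Integrable (fun ξ => g (x - ξ) * F ξ) :=
  ((hg.comp (continuous_sub_left x)).mul hF).integrable_of_hasCompactSupport hFc.mul_left

theorem hasDerivAt_setIntegral_comp_sub_mul (hF : Continuous F) (hFc : HasCompactSupport F)
    (hg : ContDiff ℝ 1 g) (s : Set ℝ) (x₀ : ℝ) :
    HasDerivAt (fun x => ∫ ξ in s, g (x - ξ) * F ξ) (∫ ξ in s, deriv g (x₀ - ξ) * F ξ) x₀ := by
  have hg' : Continuous (deriv g) := hg.continuous_deriv le_rfl
  obtain ⟨C, hC⟩ := (((isCompact_closedBall x₀ 1).prod hFc).image continuous_sub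
    ).exists_bound_of_continuousOn hg'.continuousOn
  have hbound : ∀ ξ, ∀ x ∈ Metric.ball x₀ 1, ‖deriv g (x - ξ) * F ξ‖ ≤ C * ‖F ξ‖ := by
    intro ξ x hx
    by_cases hξ : ξ ∈ tsupport F
    · rw [norm_mul]
      exact mul_le_mul_of_nonneg_right
        (hC _ ⟨(x, ξ), ⟨Metric.ball_subset_closedBall hx, hξ⟩, rfl⟩) (norm_nonneg _)
    · simp [image_eq_zero_of_notMem_tsupport hξ]
  have hdiff (ξ x : ℝ) : HasDerivAt (fun x => g (x - ξ) * F ξ) (deriv g (x - ξ) * F ξ) x := by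
    have hgx := (hg.differentiable one_ne_zero (x - ξ)).hasDerivAt.comp x
      ((hasDerivAt_id x).sub_const ξ)
    simpa using hgx.mul_const (F ξ)
  have hint (x : ℝ) := integrable_comp_sub_mul hF hFc hg.continuous x
  exact (hasDerivAt_integral_of_dominated_loc_of_deriv_le (Metric.ball_mem_nhds x₀ one_pos)
    (.of_forall fun x => (hint x).aestronglyMeasurable.restrict) (hint x₀).integrableOn
    (integrable_comp_sub_mul hF hFc hg' x₀).aestronglyMeasurable.restrict (.of_forall hbound)
    ((hF.integrable_of_hasCompactSupport hFc).norm.const_mul C).integrableOn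
    (.of_forall fun ξ x _ => hdiff ξ x)).2

theorem hasDerivAt_integral_Iic_comp_sub_mul (hF : Continuous F) (hFc : HasCompactSupport F)
    (hg : ContDiff ℝ 1 g) (x₀ : ℝ) :
    HasDerivAt (fun x => ∫ ξ in Iic x, g (x - ξ) * F ξ)
      (g 0 * F x₀ + ∫ ξ in Iic x₀, deriv g (x₀ - ξ) * F ξ) x₀ := by
  have hsplit : (fun x => ∫ ξ in Iic x, g (x - ξ) * F ξ)
      = fun x => (∫ ξ in x₀..x, g (x - ξ) * F ξ) + ∫ ξ in Iic x₀, g (x - ξ) * F ξ := by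
    funext x
    have hint := integrable_comp_sub_mul hF hFc hg.continuous x
    rw [← intervalIntegral.integral_Iic_sub_Iic hint.integrableOn hint.integrableOn, sub_add_cancel]
  rw [hsplit]
  have hdiag := hasDerivAt_intervalIntegral_of_continuous_uncurry
    (k := fun x ξ => g (x - ξ) * F ξ) (by fun_prop) x₀
  rw [sub_self] at hdiag
  exact hdiag.add (hasDerivAt_setIntegral_comp_sub_mul hF hFc hg (Iic x₀) x₀)

theorem kernelConv_piecewiseKernel_apply {R L : ℝ → ℝ} (hF : Continuous F)
    (hFc : HasCompactSupport F) (hR : Continuous R) (hL : Continuous L) (x : ℝ) :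
    kernelConv (piecewiseKernel R L) F x = (∫ ξ in Iic x, R (x - ξ) * F ξ)
      + ((∫ ξ, L (x - ξ) * F ξ) - ∫ ξ in Iic x, L (x - ξ) * F ξ) := by
  have hRi := integrable_comp_sub_mul hF hFc hR x
  have hLi := integrable_comp_sub_mul hF hFc hL x
  have hpiece : (fun ξ => piecewiseKernel R L (x - ξ) * F ξ)
      = (Iic x).indicator (fun ξ => R (x - ξ) * F ξ)
        + (Iic x)ᶜ.indicator (fun ξ => L (x - ξ) * F ξ) := by
    funext ξ
    by_cases hξ : ξ ≤ x
    · simp [piecewiseKernel, hξ]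
    · simp [piecewiseKernel, hξ, not_le.mp hξ]
  rw [kernelConv, hpiece, integral_add' (hRi.indicator measurableSet_Iic)
    (hLi.indicator measurableSet_Iic.compl), integral_indicator measurableSet_Iic,
    integral_indicator measurableSet_Iic.compl, ← integral_add_compl measurableSet_Iic hLi]
  ring

theorem hasDerivAt_kernelConv_piecewiseKernel {R L : ℝ → ℝ} (hF : Continuous F)
    (hFc : HasCompactSupport F) (hR : ContDiff ℝ 1 R) (hL : ContDiff ℝ 1 L) (x : ℝ) :
    HasDerivAt (kernelConv (piecewiseKernel R L) F)
      ((R 0 - L 0) * F x + kernelConv (piecewiseKernel (deriv R) (deriv L)) F x) x := by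
  have hR' := hR.continuous_deriv le_rfl
  have hL' := hL.continuous_deriv le_rfl
  rw [funext (kernelConv_piecewiseKernel_apply hF hFc hR.continuous hL.continuous),
    kernelConv_piecewiseKernel_apply hF hFc hR' hL']
  have hL_line := hasDerivAt_setIntegral_comp_sub_mul hF hFc hL univ x
  rw [Measure.restrict_univ] at hL_line
  exact ((hasDerivAt_integral_Iic_comp_sub_mul hF hFc hR x).add
    (hL_line.sub (hasDerivAt_integral_Iic_comp_sub_mul hF hFc hL x))).congr_deriv (by ring)

theorem kernelConv_piecewiseKernel_neg (R L : ℝ → ℝ) :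
    kernelConv (piecewiseKernel (-R) (-L)) F = -kernelConv (piecewiseKernel R L) F := by
  funext x
  have : piecewiseKernel (-R) (-L) = -piecewiseKernel R L := by
    funext t; by_cases ht : 0 ≤ t <;> simp [piecewiseKernel, ht]
  simp [kernelConv, this, integral_neg]

theorem kernelConv_piecewiseKernel_solves_source {R L φ : ℝ → ℝ} (hF : Continuous F)
    (hFc : HasCompactSupport F) (hR : ContDiff ℝ 3 R) (hL : ContDiff ℝ 3 L)
    (hR3 : deriv^[3] R = -R) (hL3 : deriv^[3] L = -L) (h0 : R 0 = L 0)
    (h1 : deriv R 0 = deriv L 0) (h2 : deriv^[2] R 0 = deriv^[2] L 0 + 1)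
    (hφ : φ = kernelConv (piecewiseKernel R L) F) (x : ℝ) :
    DifferentiableAt ℝ φ x ∧ DifferentiableAt ℝ (deriv φ) x ∧
      DifferentiableAt ℝ (deriv (deriv φ)) x ∧ deriv (deriv (deriv φ)) x + φ x = F x := by
  let φₖ (k : ℕ) := kernelConv (piecewiseKernel (deriv^[k] R) (deriv^[k] L)) F
  have hstep (k : ℕ) (hk : k < 3) (y : ℝ) : HasDerivAt (φₖ k)
      ((deriv^[k] R 0 - deriv^[k] L 0) * F y + φₖ (k + 1) y) y := by
    simpa only [φₖ, ← Function.iterate_succ_apply' deriv] using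
      hasDerivAt_kernelConv_piecewiseKernel hF hFc
        (ContDiff.iterate_deriv' 1 k (hR.of_le (by norm_cast; omega)))
        (ContDiff.iterate_deriv' 1 k (hL.of_le (by norm_cast; omega))) y
  have hφ₀ : HasDerivAt φ (φₖ 1 x) x ∧ deriv φ = φₖ 1 := by
    have h (y : ℝ) : HasDerivAt φ (φₖ 1 y) y := by
      have h₀ := hstep 0 (by norm_num) y
      simp only [Function.iterate_zero, id, h0, sub_self, zero_mul, zero_add] at h₀
      rwa [hφ]
    exact ⟨h x, funext fun y => (h y).deriv⟩
  have hφ₁ : HasDerivAt (φₖ 1) (φₖ 2 x) x ∧ deriv (φₖ 1) = φₖ 2 := by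
    have h (y : ℝ) : HasDerivAt (φₖ 1) (φₖ 2 y) y := by simpa [h1] using hstep 1 (by norm_num) y
    exact ⟨h x, funext fun y => (h y).deriv⟩
  have hφ₂ : HasDerivAt (φₖ 2) (F x - φ x) x := by
    have hφ₃ : φₖ 3 = -φ := by simp only [φₖ, hR3, hL3, kernelConv_piecewiseKernel_neg, hφ]
    simpa [h2, hφ₃, sub_eq_add_neg] using hstep 2 (by norm_num) x
  rw [hφ₀.2, hφ₁.2]
  exact ⟨hφ₀.1.differentiableAt, hφ₁.1.differentiableAt, hφ₂.differentiableAt, by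
    rw [hφ₂.deriv, sub_add_cancel]⟩

end

noncomputable def expMode (μ c : ℂ) (t : ℝ) : ℝ := (c * Complex.exp (μ * t)).re

section
variable (μ c : ℂ)

theorem hasDerivAt_expMode (t : ℝ) : HasDerivAt (expMode μ c) (expMode μ (c * μ) t) t := by
  have h : HasDerivAt (fun z : ℂ => c * Complex.exp (μ * z)) (c * (Complex.exp (μ * t) * μ)) t :=
    ((Complex.hasDerivAt_exp _).comp _
      ((hasDerivAt_id _).const_mul μ |>.congr_deriv (mul_one μ))).const_mul c
  refine h.real_of_complex.congr_deriv ?_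
  simp only [expMode]
  ring_nf

theorem deriv_expMode : deriv (expMode μ c) = expMode μ (c * μ) :=
  funext fun t => (hasDerivAt_expMode μ c t).deriv

theorem iterate_deriv_expMode (k : ℕ) : deriv^[k] (expMode μ c) = expMode μ (c * μ ^ k) := by
  induction k generalizing c with
  | zero => simp
  | succ k ih => rw [Function.iterate_succ_apply, deriv_expMode, ih, mul_assoc, ← pow_succ']

theorem contDiff_expMode (n : ℕ) : ContDiff ℝ n (expMode μ c) := by
  induction n generalizing c with
  | zero =>
    exact contDiff_zero.2 (continuous_iff_continuousAt.2 fun t =>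
      (hasDerivAt_expMode μ c t).continuousAt)
  | succ n ih =>
    rw [Nat.cast_add_one, contDiff_succ_iff_deriv, deriv_expMode]
    exact ⟨fun t => (hasDerivAt_expMode μ c t).differentiableAt, by simp, ih _⟩

theorem expMode_apply_zero : expMode μ c 0 = c.re := by simp [expMode]

theorem iterate_deriv_three_expMode {μ : ℂ} (hμ : μ ^ 3 = -1) :
    deriv^[3] (expMode μ c) = -expMode μ c := by
  funext t
  simp [iterate_deriv_expMode, hμ, expMode]

end

noncomputable def cubeRootNegOne : ℂ := Complex.exp (↑(π / 3) * Complex.I)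

theorem cubeRootNegOne_re : cubeRootNegOne.re = 1 / 2 := by
  rw [cubeRootNegOne, Complex.exp_ofReal_mul_I_re, cos_pi_div_three]

theorem cubeRootNegOne_im : cubeRootNegOne.im = √3 / 2 := by
  rw [cubeRootNegOne, Complex.exp_ofReal_mul_I_im, sin_pi_div_three]

theorem cubeRootNegOne_sq_re : (cubeRootNegOne ^ 2).re = -1 / 2 := by
  rw [pow_two, Complex.mul_re, cubeRootNegOne_re, cubeRootNegOne_im]
  linear_combination -mul_self_sqrt (zero_le_three : (0 : ℝ) ≤ 3) / 4

theorem cubeRootNegOne_pow_three : cubeRootNegOne ^ 3 = -1 := by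
  rw [cubeRootNegOne, ← Complex.exp_nat_mul, ← Complex.exp_pi_mul_I]
  push_cast
  ring_nf

theorem greenC3_eq_piecewiseKernel :
    greenC3 = piecewiseKernel (expMode (-1) (1 / 3))
      (expMode cubeRootNegOne (2 * cubeRootNegOne / 3)) := by
  funext t
  unfold greenC3 piecewiseKernel
  split_ifs
  · simp [expMode, Complex.exp_re]
  · simp [expMode, Complex.exp_re, Complex.exp_im, cubeRootNegOne_re, cubeRootNegOne_im]
    ring_nf

/-- Convolution with the sectorial Green function solves the source problem:
for continuous compactly supported `F`, the response
`φ(x) = ∫ G(x − ξ)·F(ξ) dξ` is three times differentiable and satisfies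
`φ''' + φ = F` everywhere. -/
theorem greenC3_convolution_solves_source :
    ∀ F : ℝ → ℝ, Continuous F → HasCompactSupport F →
      ∀ φ : ℝ → ℝ, (∀ x : ℝ, φ x = ∫ ξ : ℝ, greenC3 (x - ξ) * F ξ) →
      ∀ x : ℝ,
        DifferentiableAt ℝ φ x ∧
        DifferentiableAt ℝ (deriv φ) x ∧
        DifferentiableAt ℝ (deriv (deriv φ)) x ∧
        deriv (deriv (deriv φ)) x + φ x = F x := by
  intro F hF hFc φ hφ x
  have hφ_conv : φ = kernelConv (piecewiseKernel (expMode (-1) (1 / 3))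
      (expMode cubeRootNegOne (2 * cubeRootNegOne / 3))) F := by
    funext y
    rw [hφ, kernelConv, greenC3_eq_piecewiseKernel]
  refine kernelConv_piecewiseKernel_solves_source hF hFc (contDiff_expMode _ _ 3)
    (contDiff_expMode _ _ 3) ?_ ?_ ?_ ?_ ?_ hφ_conv x
  · exact iterate_deriv_three_expMode _ (by norm_num)
  · exact iterate_deriv_three_expMode _ cubeRootNegOne_pow_three
  · simp [expMode_apply_zero, cubeRootNegOne_re]
  · rw [deriv_expMode, deriv_expMode, expMode_apply_zero, expMode_apply_zero,
      show 2 * cubeRootNegOne / 3 * cubeRootNegOne = ((2 / 3 : ℝ) : ℂ) * cubeRootNegOne ^ 2 by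
        push_cast; ring,
      Complex.re_ofReal_mul, cubeRootNegOne_sq_re]
    norm_num
  · rw [iterate_deriv_expMode, iterate_deriv_expMode, expMode_apply_zero, expMode_apply_zero,
      show 2 * cubeRootNegOne / 3 * cubeRootNegOne ^ 2 = 2 / 3 * cubeRootNegOne ^ 3 by ring,
      cubeRootNegOne_pow_three]
    norm_num
end
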